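/- Let 0 < η < π/3 with 2|a|⁴ < 1, where a = e^{-iη}/(2cos η), c = 1/(1-|a|⁴), z_k = ca^{k+1}. Then for every integer j ≥ 1: (i) |z_k| ≤ |z_j| for all k ≥ j, so {z_k : k ≥ j} ⊆ closed disk D(0,|z_j|); and (ii) every point on the broken segment z₀z₁⋯z_{j-1} (the union of segments [z_{k-1}, z_k] for 1 ≤ k ≤ j-1, interpreted as the union of segments between consecutive points z₀,…,z_{j-1}) has modulus strictly greater than |z_j|. In particular, |(1-t)·1 + t·a| > |a|² for all t ∈ [0,1]. -/

import Mathlib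

/-!
Since `Re a = 1/2`, for `0 ≤ t ≤ 1` one has `|(1 - t) + t a|² = 1 - t + |a|² t²`, and with
`B = |a|² ∈ [1/4, 3/4)` this is at least `B (1 - t + t²) ≥ 3B/4 > B²`. Thus the segment `[1, a]`
stays outside the closed disk of radius `|a|²`. The segment `[z_{k-1}, z_k]` is its image under
multiplication by `c aᵏ`, so it stays outside the disk of radius `c |a|^(k+2) ≥ |z_j|` for `j ≥ k + 1`.
-/

open Real Set

lemma Complex.re_exp_neg_mul_I_div_two_cos {η : ℝ} (hη : Real.cos η ≠ 0) :
    (Complex.exp (-(η : ℂ) * Complex.I) / (2 * Real.cos η)).re = 1 / 2 := by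
  have hcast : (2 * Real.cos η : ℂ) = ((2 * Real.cos η : ℝ) : ℂ) := by push_cast; ring
  rw [hcast, Complex.div_ofReal_re, ← Complex.ofReal_neg, Complex.exp_ofReal_mul_I_re,
    Real.cos_neg]
  field_simp

lemma Complex.normSq_ofReal_add_ofReal_mul_of_re_eq_half {a : ℂ} (ha : a.re = 1 / 2) (s t : ℝ) :
    Complex.normSq (s + t * a) = s ^ 2 + s * t + ‖a‖ ^ 2 * t ^ 2 := by
  rw [Complex.sq_norm, Complex.normSq_apply, Complex.normSq_apply]
  simp only [Complex.add_re, Complex.add_im, Complex.mul_re, Complex.mul_im, Complex.ofReal_re,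
    Complex.ofReal_im, ha]
  ring

lemma sq_lt_one_sub_add_mul_sq {B t : ℝ} (hB0 : 0 < B) (hB1 : B < 3 / 4) (ht : t ≤ 1) :
    B ^ 2 < 1 - t + B * t ^ 2 :=
  calc B ^ 2 < 3 / 4 * B := by nlinarith
    _ ≤ B * (1 - t + t ^ 2) := by nlinarith [sq_nonneg (t - 1 / 2)]
    _ ≤ 1 - t + B * t ^ 2 := by nlinarith

lemma Complex.sq_norm_lt_norm_of_mem_segment_one {a : ℂ} (ha : a.re = 1 / 2)
    (ha4 : 2 * ‖a‖ ^ 4 < 1) {p : ℂ} (hp : p ∈ segment ℝ 1 a) : ‖a‖ ^ 2 < ‖p‖ := by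
  obtain ⟨s, t, hs, -, hst, rfl⟩ := hp
  obtain rfl : s = 1 - t := by linarith
  have hB0 : 0 < ‖a‖ ^ 2 := by
    have : a ≠ 0 := fun h => by norm_num [h] at ha
    positivity
  have hB1 : ‖a‖ ^ 2 < 3 / 4 := by nlinarith
  have hnorm : ‖(1 - t) • (1 : ℂ) + t • a‖ ^ 2 = 1 - t + ‖a‖ ^ 2 * t ^ 2 := by
    rw [Complex.real_smul, Complex.real_smul, mul_one, Complex.sq_norm,
      Complex.normSq_ofReal_add_ofReal_mul_of_re_eq_half ha]
    ring
  refine lt_of_pow_lt_pow_left₀ 2 (norm_nonneg _) ?_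
  rw [hnorm]
  exact sq_lt_one_sub_add_mul_sq hB0 hB1 (by linarith)

lemma exists_mem_segment_of_mem_segment_mul {w x y p : ℂ}
    (hp : p ∈ segment ℝ (w * x) (w * y)) : ∃ q ∈ segment ℝ x y, p = w * q := by
  obtain ⟨s, t, hs, ht, hst, rfl⟩ := hp
  exact ⟨s • x + t • y, ⟨s, t, hs, ht, hst, rfl⟩, by simp only [Complex.real_smul]; ring⟩

theorem stmt17 (η : ℝ) (hη0 : 0 < η) (hη1 : η < π / 3)
    (a : ℂ) (ha : a = Complex.exp (-(η : ℂ) * Complex.I) / (2 * Real.cos η))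
    (h4 : 2 * ‖a‖ ^ 4 < 1)
    (c : ℝ) (hc : c = 1 / (1 - ‖a‖ ^ 4))
    (z : ℕ → ℂ) (hz : ∀ k, z k = (c : ℂ) * a ^ (k + 1)) :
    (∀ j k : ℕ, 1 ≤ j → j ≤ k → ‖z k‖ ≤ ‖z j‖) ∧
    (∀ j k : ℕ, 1 ≤ j → 1 ≤ k → k + 1 ≤ j →
      ∀ p ∈ segment ℝ (z (k - 1)) (z k), ‖z j‖ < ‖p‖) ∧
    (∀ t : ℝ, t ∈ Set.Icc (0 : ℝ) 1 →
      ‖a‖ ^ 2 < ‖(1 - (t : ℂ)) * 1 + (t : ℂ) * a‖) := by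
  have hre : a.re = 1 / 2 := ha ▸ Complex.re_exp_neg_mul_I_div_two_cos
    (Real.cos_pos_of_mem_Ioo ⟨by linarith [pi_pos], by linarith [pi_pos]⟩).ne'
  have ha0 : 0 < ‖a‖ := norm_pos_iff.2 fun h => by norm_num [h] at hre
  have ha1 : ‖a‖ ≤ 1 := by nlinarith [sq_nonneg (‖a‖ ^ 2 - 1)]
  have hc0 : 0 < c := by rw [hc]; exact div_pos one_pos (by nlinarith)
  have hnorm_z : ∀ k, ‖z k‖ = c * ‖a‖ ^ (k + 1) := fun k => by
    rw [hz, norm_mul, norm_pow, Complex.norm_of_nonneg hc0.le]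
  have hsegment := fun p => Complex.sq_norm_lt_norm_of_mem_segment_one hre h4 (p := p)
  refine ⟨fun j k _ hjk => ?_, fun j k _ hk hkj p hp => ?_, fun t ⟨ht0, ht1⟩ => ?_⟩
  · rw [hnorm_z, hnorm_z]
    exact mul_le_mul_of_nonneg_left (pow_le_pow_of_le_one (norm_nonneg a) ha1 (by omega)) hc0.le
  · rw [hz, hz, Nat.sub_add_cancel hk, ← mul_one (_ * a ^ k), pow_succ, ← mul_assoc] at hp
    obtain ⟨q, hq, rfl⟩ := exists_mem_segment_of_mem_segment_mul hp
    rw [norm_mul, norm_mul, norm_pow, Complex.norm_of_nonneg hc0.le, hnorm_z]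
    calc c * ‖a‖ ^ (j + 1) ≤ c * (‖a‖ ^ k * ‖a‖ ^ 2) := by
          rw [← pow_add]
          exact mul_le_mul_of_nonneg_left (pow_le_pow_of_le_one ha0.le ha1 (by omega)) hc0.le
      _ < c * ‖a‖ ^ k * ‖q‖ := by
          rw [mul_assoc]
          gcongr
          exact hsegment q hq
  · refine hsegment _ ⟨1 - t, t, by linarith, ht0, by ring, ?_⟩
    simp [Complex.real_smul]
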